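/- Let G = (V, E) be a multigraph, let k ≥ 2 be an integer, and let U ⊆ E be a submultiset such that (V, U) is a k-trail and |U| is maximum among all submultisets U' ⊆ E for which (V, U') is a k-trail. Then the multigraph (V, E ∖ U) is acyclic, i.e., contains no cycle. -/

import Mathlib

/-!
Adding a closed walk `v₀, v₁, …, v_r, v₀` of `G - U` to a `k`-trail `U` gives a `k`-trail.
Take a connected preimage `H` of maximum degree `≤ k` and an edge `w₀x` of `H` with `w₀ ↦ v₀`
(it exists because `|V| ≥ 2`). Subdividing `w₀x` successively by new vertices mapped to
`v₁, …, v_r, v₀` keeps `H` connected, leaves old degrees unchanged and gives the new vertices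
degree `2 ≤ k`, while the image gains exactly the edges of the walk. So `|U|` was not maximum.
-/

/-- A multigraph on vertex type `V`: a finite multiset of unordered pairs of
vertices (loops and parallel edges allowed). -/
structure Multigraph (V : Type) where
  edges : Multiset (Sym2 V)

namespace Multigraph

open Classical in
/-- The degree of a vertex: number of edge-endpoints at `v`, a loop counting twice. -/
noncomputable def deg {V : Type} (G : Multigraph V) (v : V) : ℕ :=
  (G.edges.map fun e => if e = Sym2.diag v then 2 else if v ∈ e then 1 else 0).sum

/-- Adjacency in a multigraph. -/
def Adj {V : Type} (G : Multigraph V) (u v : V) : Prop := s(u, v) ∈ G.edges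

/-- A multigraph is connected if it has a vertex and any two vertices are joined by a walk. -/
def Connected {V : Type} (G : Multigraph V) : Prop :=
  Nonempty V ∧ ∀ u v : V, Relation.ReflTransGen G.Adj u v

open Classical in
/-- `G` is the homomorphic image of `H` by the onto function `φ`: for all `u v`,
the number of edges of `G` between `u` and `v` equals the number of edges of `H`
whose endpoints are mapped by `φ` to `{u, v}`. -/
def IsHomImage {V W : Type} (G : Multigraph V) (H : Multigraph W) (φ : W → V) : Prop :=
  Function.Surjective φ ∧
    ∀ u v : V, G.edges.count s(u, v) = (H.edges.map (Sym2.map φ)).count s(u, v)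

/-- A tree: a connected multigraph with `|F| = |W| - 1`. -/
def IsTree {W : Type} (H : Multigraph W) : Prop :=
  Connected H ∧ Multiset.card H.edges + 1 = Nat.card W

/-- A multigraph is a `k`-trail if it is the homomorphic image of a (finite)
connected multigraph of maximum degree at most `k`. -/
def IsKTrail {V : Type} (G : Multigraph V) (k : ℕ) : Prop :=
  ∃ (W : Type) (_ : Finite W) (H : Multigraph W) (φ : W → V),
    Connected H ∧ (∀ w, H.deg w ≤ k) ∧ IsHomImage G H φ

/-- `G` contains a `k`-trail if some submultiset `U` of its edges gives a `k`-trail `(V, U)`. -/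
def ContainsKTrail {V : Type} (G : Multigraph V) (k : ℕ) : Prop :=
  ∃ U : Multiset (Sym2 V), U ≤ G.edges ∧ IsKTrail (Multigraph.mk U) k

/-- `lam` is a feasible multiplicity vector for `G`. -/
def FeasibleMult {V : Type} (G : Multigraph V) (lam : V → ℕ) : Prop :=
  ∃ (W : Type) (_ : Finite W) (H : Multigraph W) (φ : W → V),
    Connected H ∧ IsHomImage G H φ ∧ ∀ v : V, Nat.card (φ ⁻¹' {v}) = lam v

end Multigraph

open Multigraph


/-- `C` is the edge multiset of a cycle in `G`: there are distinct vertices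
`v_0, …, v_r` (`r + 1 ≥ 1` of them) such that `C` consists of the edges
`{v_i, v_{i+1}}` (indices mod `r + 1`), using distinct edge occurrences of `G`. -/
def IsCycleEdges {V : Type} (G : Multigraph V) (C : Multiset (Sym2 V)) : Prop :=
  ∃ (r : ℕ) (v : Fin (r + 1) → V), Function.Injective v ∧
    C = Multiset.map (fun i : Fin (r + 1) => s(v i, v (i + 1))) Finset.univ.val ∧
    C ≤ G.edges

open Fin.NatCast in
theorem Fin.univ_val_map_eq_range_map {α : Type} {n : ℕ} [NeZero n] (f : Fin n → α) :
    Finset.univ.val.map f = (Multiset.range n).map fun i : ℕ => f i := by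
  have h := congrArg Finset.val (Fin.map_valEmbedding_univ (n := n))
  rw [Nat.Iio_eq_range] at h
  simp only [Finset.map_val, Fin.valEmbedding_apply, Finset.range_val] at h
  rw [← h, Multiset.map_map]
  simp

namespace Multigraph

open Classical

variable {V W : Type}

noncomputable def incidence (v : V) (e : Sym2 V) : ℕ :=
  if e = Sym2.diag v then 2 else if v ∈ e then 1 else 0

theorem incidence_mk (v a b : V) :
    incidence v s(a, b) = (if a = v then 1 else 0) + (if b = v then 1 else 0) := by
  by_cases ha : a = v <;> by_cases hb : b = v <;>
    simp [incidence, Sym2.diag, ha, hb, eq_comm (a := v)]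

theorem incidence_map_of_injective {f : W → V} (hf : Function.Injective f) (w : W) (e : Sym2 W) :
    incidence (f w) (e.map f) = incidence w e := by
  induction e using Sym2.ind with
  | _ a b => simp only [Sym2.map_mk, incidence_mk, hf.eq_iff]

theorem incidence_map_of_notMem_range {f : W → V} {v : V} (hv : v ∉ Set.range f) (e : Sym2 W) :
    incidence v (e.map f) = 0 := by
  induction e using Sym2.ind with
  | _ a b => simp_all [incidence_mk]

theorem deg_cons (e : Sym2 V) (M : Multiset (Sym2 V)) (v : V) :
    deg ⟨e ::ₘ M⟩ v = incidence v e + deg ⟨M⟩ v := by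
  simp only [deg, Multiset.map_cons, Multiset.sum_cons]
  rfl

theorem deg_eq_incidence_add_deg_erase {G : Multigraph V} {e : Sym2 V} (he : e ∈ G.edges) (v : V) :
    G.deg v = incidence v e + deg ⟨G.edges.erase e⟩ v := by
  rw [← deg_cons, Multiset.cons_erase he]

theorem deg_map_of_injective {f : W → V} (hf : Function.Injective f) (M : Multiset (Sym2 W))
    (w : W) : deg ⟨M.map (Sym2.map f)⟩ (f w) = deg ⟨M⟩ w := by
  simp only [deg, Multiset.map_map]
  exact congrArg Multiset.sum (Multiset.map_congr rfl fun e _ => incidence_map_of_injective hf w e)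

theorem deg_map_of_notMem_range {f : W → V} {v : V} (hv : v ∉ Set.range f)
    (M : Multiset (Sym2 W)) : deg ⟨M.map (Sym2.map f)⟩ v = 0 := by
  simp only [deg, Multiset.map_map]
  exact Multiset.sum_eq_zero fun n hn => by
    obtain ⟨e, -, rfl⟩ := Multiset.mem_map.1 hn
    exact incidence_map_of_notMem_range hv e

theorem Adj.symm {G : Multigraph V} {u v : V} (h : G.Adj u v) : G.Adj v u := by
  rwa [Adj, Sym2.eq_swap]

instance (G : Multigraph V) : Std.Symm G.Adj := ⟨fun _ _ => Adj.symm⟩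

theorem connected_of_forall_reflTransGen {G : Multigraph V} (v₀ : V)
    (h : ∀ v, Relation.ReflTransGen G.Adj v₀ v) : G.Connected :=
  ⟨⟨v₀⟩, fun u v => (symm (h u)).trans (h v)⟩

noncomputable def subdivide (H : Multigraph W) (a b : W) : Multigraph (Option W) :=
  ⟨s(some a, none) ::ₘ s(none, some b) ::ₘ (H.edges.erase s(a, b)).map (Sym2.map some)⟩

section Subdivide

variable {H : Multigraph W} {a b : W}

theorem deg_subdivide_some (hab : s(a, b) ∈ H.edges) (w : W) :
    (H.subdivide a b).deg (some w) = H.deg w := by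
  rw [deg_eq_incidence_add_deg_erase hab]
  simp only [subdivide, deg_cons, deg_map_of_injective (Option.some_injective W), incidence_mk,
    Option.some_inj, reduceCtorEq, if_false]
  omega

theorem deg_subdivide_none : (H.subdivide a b).deg none = 2 := by
  simp [subdivide, deg_cons, incidence_mk, deg_map_of_notMem_range]

theorem Connected.subdivide (hH : H.Connected) (hab : s(a, b) ∈ H.edges) :
    (H.subdivide a b).Connected := by
  have ha : (H.subdivide a b).Adj (some a) none := Multiset.mem_cons_self _ _
  have hb : (H.subdivide a b).Adj none (some b) :=
    Multiset.mem_cons_of_mem (Multiset.mem_cons_self _ _)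
  have lift : ∀ p q, H.Adj p q → Relation.ReflTransGen (H.subdivide a b).Adj (some p) (some q) := by
    intro p q hpq
    by_cases he : s(p, q) = s(a, b)
    · rcases Sym2.eq_iff.1 he with ⟨rfl, rfl⟩ | ⟨rfl, rfl⟩
      · exact .tail (.single ha) hb
      · exact .tail (.single hb.symm) ha.symm
    · refine .single (Multiset.mem_cons_of_mem (Multiset.mem_cons_of_mem ?_))
      exact Multiset.mem_map_of_mem _ ((Multiset.mem_erase_of_ne he).2 hpq)
  refine connected_of_forall_reflTransGen (some a) ?_
  rintro (_ | w)
  · exact .single ha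
  · exact Relation.ReflTransGen.lift' some lift a w (hH.2 a w)

theorem map_edges_subdivide (φ : W → V) (y : V) :
    (H.subdivide a b).edges.map (Sym2.map (Option.elim · y φ)) =
      s(φ a, y) ::ₘ s(y, φ b) ::ₘ (H.edges.erase s(a, b)).map (Sym2.map φ) := by
  simp only [subdivide, Multiset.map_cons, Multiset.map_map, ← Sym2.map_comp, Sym2.map_mk]
  rfl

end Subdivide

/-- A preimage witnessing that the multigraph `⟨T.image⟩` is a `k`-trail. -/
structure KTrailModel (V : Type) (k : ℕ) where
  W : Type
  [finite : Finite W]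
  H : Multigraph W
  φ : W → V
  connected : H.Connected
  deg_le : ∀ w, H.deg w ≤ k
  surjective : Function.Surjective φ

attribute [instance] KTrailModel.finite

namespace KTrailModel

variable {k : ℕ}

def image (T : KTrailModel V k) : Multiset (Sym2 V) :=
  T.H.edges.map (Sym2.map T.φ)

theorem image_eq_cons_of_mem (T : KTrailModel V k) {a b : T.W} (hab : s(a, b) ∈ T.H.edges) :
    T.image = s(T.φ a, T.φ b) ::ₘ (T.H.edges.erase s(a, b)).map (Sym2.map T.φ) := by
  conv_lhs => rw [image, ← Multiset.cons_erase hab]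
  exact Multiset.map_cons _ _ _

theorem exists_edge_from_fiber [Nontrivial V] (T : KTrailModel V k) (y : V) :
    ∃ a b, s(a, b) ∈ T.H.edges ∧ T.φ a = y := by
  obtain ⟨y', hy'⟩ := exists_ne y
  obtain ⟨a, rfl⟩ := T.surjective y
  obtain ⟨a', rfl⟩ := T.surjective y'
  rcases (T.connected.2 a a').cases_head with rfl | ⟨b, hab, -⟩
  · exact absurd rfl hy'
  · exact ⟨a, b, hab, rfl⟩

noncomputable def subdivide (hk : 2 ≤ k) (T : KTrailModel V k) {a b : T.W}
    (hab : s(a, b) ∈ T.H.edges) (y : V) : KTrailModel V k where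
  W := Option T.W
  H := T.H.subdivide a b
  φ := (Option.elim · y T.φ)
  connected := T.connected.subdivide hab
  deg_le
    | none => deg_subdivide_none.trans_le hk
    | some w => (deg_subdivide_some hab w).trans_le (T.deg_le w)
  surjective y' := (T.surjective y').elim fun w hw => ⟨some w, hw⟩

theorem image_subdivide (hk : 2 ≤ k) (T : KTrailModel V k) {a b : T.W}
    (hab : s(a, b) ∈ T.H.edges) (y : V) {R : Multiset (Sym2 V)}
    (hR : T.image = s(T.φ a, T.φ b) ::ₘ R) :
    (T.subdivide hk hab y).image = s(T.φ a, y) ::ₘ s(y, T.φ b) ::ₘ R := by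
  rw [image_eq_cons_of_mem T hab, Multiset.cons_inj_right] at hR
  rw [← hR]
  exact map_edges_subdivide T.φ y

theorem exists_subdivide_along_walk (hk : 2 ≤ k) (T : KTrailModel V k) {a b : T.W}
    (hab : s(a, b) ∈ T.H.edges) {R : Multiset (Sym2 V)} (hR : T.image = s(T.φ a, T.φ b) ::ₘ R)
    (u : ℕ → V) (hu : u 0 = T.φ a) (n : ℕ) :
    ∃ (T' : KTrailModel V k) (c d : T'.W), s(c, d) ∈ T'.H.edges ∧ T'.φ c = u n ∧
      T'.φ d = T.φ b ∧
      T'.image = s(u n, T.φ b) ::ₘ ((Multiset.range n).map (fun i => s(u i, u (i + 1))) + R) := by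
  induction n with
  | zero => exact ⟨T, a, b, hab, hu.symm, rfl, by simp [hR, hu]⟩
  | succ n ih =>
    obtain ⟨T', c, d, hcd, hc, hd, hT'⟩ := ih
    refine ⟨T'.subdivide hk hcd (u (n + 1)), none, some d, ?_, rfl, hd, ?_⟩
    · exact Multiset.mem_cons_of_mem (Multiset.mem_cons_self _ _)
    · rw [← hc, ← hd] at hT'
      rw [image_subdivide hk T' hcd _ hT', Multiset.range_succ, Multiset.map_cons,
        Multiset.cons_add, Multiset.cons_swap, hc, hd]

end KTrailModel

theorem isKTrail_iff_exists_image_eq {k : ℕ} (M : Multiset (Sym2 V)) :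
    IsKTrail ⟨M⟩ k ↔ ∃ T : KTrailModel V k, T.image = M := by
  constructor
  · rintro ⟨W, _, H, φ, hconn, hdeg, hsurj, hcount⟩
    refine ⟨⟨W, H, φ, hconn, hdeg, hsurj⟩, Multiset.ext.2 fun e => ?_⟩
    induction e using Sym2.ind with
    | _ u v => exact (hcount u v).symm
  · rintro ⟨T, rfl⟩
    exact ⟨T.W, T.finite, T.H, T.φ, T.connected, T.deg_le, T.surjective, fun _ _ => rfl⟩

open Fin.NatCast in
theorem IsKTrail.add_closedWalk [Nontrivial V] {k : ℕ} (hk : 2 ≤ k) {U : Multiset (Sym2 V)}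
    (hU : IsKTrail ⟨U⟩ k) {r : ℕ} (v : Fin (r + 1) → V) :
    IsKTrail ⟨U + Finset.univ.val.map fun i => s(v i, v (i + 1))⟩ k := by
  obtain ⟨T, rfl⟩ := (isKTrail_iff_exists_image_eq U).1 hU
  obtain ⟨a, b, hab, ha⟩ := T.exists_edge_from_fiber (v 0)
  obtain ⟨T', -, -, -, -, -, hT'⟩ := T.exists_subdivide_along_walk hk hab
    (T.image_eq_cons_of_mem hab) (fun i => v i) (by simp [ha]) (r + 1)
  refine (isKTrail_iff_exists_image_eq _).2 ⟨T', ?_⟩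
  rw [hT', T.image_eq_cons_of_mem hab, Fin.univ_val_map_eq_range_map, Fin.natCast_self, ha,
    Multiset.cons_add, Multiset.add_comm]
  simp only [Nat.cast_succ]

end Multigraph

open Classical in
theorem max_kTrail_complement_acyclic_general {V : Type}
    (hV : 2 ≤ Nat.card V)
    (G : Multigraph V) (k : ℕ) (hk : 2 ≤ k)
    (U : Multiset (Sym2 V)) (hU : U ≤ G.edges)
    (hUtrail : IsKTrail (Multigraph.mk U) k)
    (hmax : ∀ U' : Multiset (Sym2 V), U' ≤ G.edges → IsKTrail (Multigraph.mk U') k →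
      Multiset.card U' ≤ Multiset.card U) :
    ¬ ∃ C : Multiset (Sym2 V), IsCycleEdges (Multigraph.mk (G.edges - U)) C := by
  rintro ⟨C, r, v, -, rfl, hC⟩
  have : Finite V := Nat.finite_of_card_ne_zero (by omega)
  have : Nontrivial V := Finite.one_lt_card_iff_nontrivial.1 hV
  have hUC : U + Finset.univ.val.map (fun i => s(v i, v (i + 1))) ≤ G.edges :=
    (add_le_add_right hC U).trans_eq (add_tsub_cancel_of_le hU)
  have hcard := hmax _ hUC (hUtrail.add_closedWalk hk v)
  simp at hcard

open Classical in
/-- If `(V, U)` is a `k`-trail contained in `G` with `|U|` maximum, then `(V, E ∖ U)`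
is acyclic. -/
theorem max_kTrail_complement_acyclic {V : Type} [Finite V]
    (hV : 2 ≤ Nat.card V)
    (G : Multigraph V) (k : ℕ) (hk : 2 ≤ k)
    (U : Multiset (Sym2 V)) (hU : U ≤ G.edges)
    (hUtrail : IsKTrail (Multigraph.mk U) k)
    (hmax : ∀ U' : Multiset (Sym2 V), U' ≤ G.edges → IsKTrail (Multigraph.mk U') k →
      Multiset.card U' ≤ Multiset.card U) :
    ¬ ∃ C : Multiset (Sym2 V), IsCycleEdges (Multigraph.mk (G.edges - U)) C :=
  max_kTrail_complement_acyclic_general hV G k hk U hU hUtrail hmax
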